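/- arXiv:2410.18999 — 5 statements merged into one kernel-verified Lean document; each statement's English description precedes it below -/
import Mathlib

section
/- A sequence d₁ ≥ d₂ ≥ ... ≥ dₙ > 0 of positive integers is graphic (realizable as the degree sequence of a simple graph) if and only if the sum Σdᵢ is even and for each k with 1 ≤ k ≤ n, Σ_{i=1}^k dᵢ ≤ k(k-1) + Σ_{i=k+1}^n min(k, dᵢ). -/
/-!
Necessity: the `k` vertices of a set `S` span at most `k (k - 1) / 2` edges among themselves, and
a vertex `w ∉ S` sends at most `min k (deg w)` edges into `S`.

Sufficiency, after Choudum: induct on the degree sum. Lower by one the last entry `D t` of the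
leading block of maximal entries (taken before the last positive entry) and the last positive
entry `D p`. The Erdős–Gallai inequalities survive: for `k > t` the left side drops at least as
much as the right; for `k ≤ t` the right side loses at most `[D 0 ≤ k] + [D p ≤ k]`, which is
covered by slack coming from the inequality at `t + 1` or, in the extreme case, from parity. In a
realization of the lowered sequence the vertices `t` and `p` are then joined, directly if they
are not adjacent, and otherwise by trading an edge `xy` for `tx` and `py`.
-/

/-- A finite integer sequence (given as `d : Fin n → ℕ`) is graphic if it is realized as
the degree sequence of a simple graph on `n` vertices. -/
def IsGraphicSeq {n : ℕ} (d : Fin n → ℕ) : Prop :=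
  ∃ (G : SimpleGraph (Fin n)) (_ : DecidableRel G.Adj), ∀ i, G.degree i = d i

open Finset

namespace SimpleGraph

theorem sum_degree_le_card_mul_add_sum_compl_min {V : Type*} [Fintype V] [DecidableEq V]
    (G : SimpleGraph V) [DecidableRel G.Adj] (S : Finset V) :
    ∑ v ∈ S, G.degree v ≤ #S * (#S - 1) + ∑ v ∈ Sᶜ, min #S (G.degree v) := by
  have hsplit : ∀ v, G.degree v = #{w ∈ S | G.Adj v w} + #{w ∈ Sᶜ | G.Adj v w} := by
    intro v
    rw [← card_neighborFinset_eq_degree, neighborFinset_eq_filter, ← card_union_of_disjoint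
      (disjoint_filter_filter disjoint_compl_right), ← filter_union, union_compl]
  have hinner : ∀ v ∈ S, #{w ∈ S | G.Adj v w} ≤ #S - 1 := fun v hv =>
    (card_le_card fun w hw => by
      obtain ⟨hwS, hvw⟩ := mem_filter.1 hw
      exact mem_erase.2 ⟨hvw.ne.symm, hwS⟩).trans (card_erase_of_mem hv).le
  have hcross : ∑ v ∈ S, #{w ∈ Sᶜ | G.Adj v w} = ∑ w ∈ Sᶜ, #{v ∈ S | G.Adj w v} := by
    simp_rw [card_filter]
    rw [sum_comm]
    simp_rw [G.adj_comm]
  have hmin : ∀ w, #{v ∈ S | G.Adj w v} ≤ min #S (G.degree w) := fun w =>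
    le_min (card_filter_le _ _) (by
      rw [← card_neighborFinset_eq_degree, neighborFinset_eq_filter]
      exact card_le_card (filter_subset_filter _ (subset_univ _)))
  calc ∑ v ∈ S, G.degree v
      = ∑ v ∈ S, #{w ∈ S | G.Adj v w} + ∑ v ∈ S, #{w ∈ Sᶜ | G.Adj v w} := by
        rw [← sum_add_distrib]; exact sum_congr rfl fun v _ => hsplit v
    _ ≤ ∑ _v ∈ S, (#S - 1) + ∑ w ∈ Sᶜ, min #S (G.degree w) := by
        rw [hcross]
        exact add_le_add (sum_le_sum hinner) (sum_le_sum fun w _ => hmin w)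
    _ = #S * (#S - 1) + ∑ w ∈ Sᶜ, min #S (G.degree w) := by rw [sum_const, smul_eq_mul]

variable {V : Type*} [DecidableEq V] {G : SimpleGraph V} {u v : V}

theorem degree_edge (huv : u ≠ v) (w : V) [Fintype ((edge u v).neighborSet w)] :
    (edge u v).degree w = (Pi.single u 1 : V → ℕ) w + (Pi.single v 1 : V → ℕ) w := by
  rw [← card_neighborFinset_eq_degree]
  by_cases hwu : w = u
  · subst hwu
    rw [show (edge w v).neighborFinset w = {v} by ext; simp [edge_adj]; grind]
    simp [huv]
  by_cases hwv : w = v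
  · subst hwv
    rw [show (edge u w).neighborFinset w = {u} by ext; simp [edge_adj]; grind]
    simp [huv]
  · rw [show (edge u v).neighborFinset w = ∅ by ext; simp [edge_adj, hwu, hwv]]
    simp [hwu, hwv]

theorem degree_sup_edge [Fintype V] (huv : u ≠ v) (h : ¬G.Adj u v) (w : V)
    [Fintype (G.neighborSet w)] [Fintype ((G ⊔ edge u v).neighborSet w)] :
    (G ⊔ edge u v).degree w =
      G.degree w + (Pi.single u 1 : V → ℕ) w + (Pi.single v 1 : V → ℕ) w := by
  rw [← card_neighborFinset_eq_degree, neighborFinset_sup,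
    card_union_of_disjoint (disjoint_neighborFinset_of_disjoint _ _ _ (G.disjoint_edge.2 h)),
    card_neighborFinset_eq_degree, card_neighborFinset_eq_degree, degree_edge huv, add_assoc]

theorem degree_sdiff_edge [Fintype V] (h : G.Adj u v) (w : V) [Fintype (G.neighborSet w)]
    [Fintype ((G \ edge u v).neighborSet w)] :
    (G \ edge u v).degree w + (Pi.single u 1 : V → ℕ) w + (Pi.single v 1 : V → ℕ) w =
      G.degree w := by
  have hsub : (edge u v).neighborFinset w ⊆ G.neighborFinset w := fun x hx => by
    rw [mem_neighborFinset] at hx ⊢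
    exact G.edge_le_iff.2 (Or.inr h) hx
  rw [← card_neighborFinset_eq_degree, neighborFinset_sdiff, add_assoc,
    ← degree_edge (G.ne_of_adj h), ← card_neighborFinset_eq_degree,
    card_sdiff_add_card_eq_card hsub, card_neighborFinset_eq_degree]

theorem exists_degree_eq_add_single_add_single [Fintype V] [DecidableRel G.Adj] {a b x : V}
    (hab : a ≠ b) (hxa : x ≠ a) (hax : ¬G.Adj a x) (hx : x = b ∨ G.degree b < G.degree x) :
    ∃ (H : SimpleGraph V) (_ : DecidableRel H.Adj),
      ∀ w, H.degree w = G.degree w + (Pi.single a 1 : V → ℕ) w + (Pi.single b 1 : V → ℕ) w := by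
  by_cases hadj : G.Adj a b
  swap
  · exact ⟨G ⊔ edge a b, inferInstance, fun w => degree_sup_edge hab hadj w⟩
  have hxb : x ≠ b := by rintro rfl; exact hax hadj
  have hbx : G.degree b < G.degree x := hx.resolve_left hxb
  -- `|N(x) \ {b}| ≥ deg b > |N(b) \ {a}|`
  obtain ⟨y, hy, hyb⟩ : ∃ y ∈ (G.neighborFinset x).erase b, y ∉ (G.neighborFinset b).erase a := by
    apply exists_mem_notMem_of_card_lt_card
    have hb : 0 < G.degree b := (G.degree_pos_iff_exists_adj b).2 ⟨a, hadj.symm⟩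
    have := pred_card_le_card_erase (s := G.neighborFinset x) (a := b)
    rw [card_erase_of_mem (by simpa using hadj.symm)]
    rw [card_neighborFinset_eq_degree] at this ⊢
    omega
  obtain ⟨hyb', hxy⟩ : y ≠ b ∧ G.Adj x y := by simpa using hy
  have hya : y ≠ a := by rintro rfl; exact hax hxy.symm
  have hby : ¬G.Adj b y := fun h => hyb (by simpa [hya] using h)
  refine ⟨G \ edge x y ⊔ edge a x ⊔ edge b y, inferInstance, fun w => ?_⟩
  have h₁ := degree_sdiff_edge hxy w
  have h₂ := degree_sup_edge (G := G \ edge x y) hxa.symm (by simp [sdiff_adj, edge_adj, hax]) w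
  have h₃ := degree_sup_edge (G := G \ edge x y ⊔ edge a x) (u := b) (v := y)
    hyb'.symm (by simp [sdiff_adj, edge_adj, hby, hab.symm, hxb.symm]) w
  omega

end SimpleGraph

theorem Fin.sum_filter_val {M : Type*} [AddCommMonoid M] {n : ℕ} (P : ℕ → Prop)
    [DecidablePred P] (f : ℕ → M) :
    ∑ i ∈ univ.filter (fun i : Fin n => P i), f i = ∑ i ∈ (range n).filter P, f i := by
  rw [← Nat.Iio_eq_range, ← Fin.map_valEmbedding_univ, filter_map, sum_map]
  rfl

theorem Fin.sum_filter_val_lt {M : Type*} [AddCommMonoid M] {n k : ℕ} (hk : k ≤ n) (f : ℕ → M) :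
    ∑ i ∈ univ.filter (fun i : Fin n => i.val < k), f i = ∑ i ∈ range k, f i := by
  rw [Fin.sum_filter_val (· < k), range_eq_Ico, Ico_filter_lt, min_eq_right hk, ← range_eq_Ico]

theorem Fin.sum_filter_le_val {M : Type*} [AddCommMonoid M] {n : ℕ} (k : ℕ) (f : ℕ → M) :
    ∑ i ∈ univ.filter (fun i : Fin n => k ≤ i.val), f i = ∑ i ∈ Ico k n, f i := by
  rw [Fin.sum_filter_val (k ≤ ·), range_eq_Ico, Ico_filter_le, Nat.zero_max]

theorem Fin.antitone_dite {n : ℕ} {d : Fin n → ℕ} (hd : Antitone d) :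
    Antitone fun j => if h : j < n then d ⟨j, h⟩ else 0 := fun i j hij => by
  dsimp only
  split_ifs with hj hi hi
  · exact hd hij
  all_goals omega

theorem Nat.mul_min_le_mul_min {a b : ℕ} (x : ℕ) (hab : a ≤ b) : a * min b x ≤ b * min a x := by
  rcases le_total x a with hxa | hax
  · rw [min_eq_right (hxa.trans hab), min_eq_right hxa]
    exact Nat.mul_le_mul_right x hab
  · rw [min_eq_left hax, mul_comm b]
    exact Nat.mul_le_mul_left a (min_le_left b x)

theorem Nat.add_two_le_of_even {k c j S : ℕ} (hc : 0 < c) (hck : c ≤ k) (hj : 0 < j) (hS : 0 < S)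
    (heven : Even ((k + j) * c + S)) : k * c + 1 + 1 ≤ k * (k - 1) + j * c + S := by
  rcases hck.lt_or_eq with hck | rfl
  · have : k * c ≤ k * (k - 1) := Nat.mul_le_mul_left k (by omega)
    nlinarith
  · have hjS : 2 ≤ j ∨ 2 ≤ S := by
      by_contra! h
      obtain ⟨rfl, rfl⟩ : j = 1 ∧ S = 1 := by omega
      rw [mul_comm] at heven
      exact Nat.not_even_iff_odd.2 (Nat.even_mul_succ_self c).add_one heven
    obtain ⟨k, rfl⟩ : ∃ k', c = k' + 1 := ⟨c - 1, by omega⟩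
    rw [Nat.add_sub_cancel]
    rcases hjS with h | h <;> nlinarith

theorem Nat.mul_add_one_le_of_mul_le_add {k m c U T : ℕ} (hk : 0 < k) (hkm : k ≤ m)
    (h1 : m * c ≤ m * (m - 1) + U) (h2 : k * U + 1 ≤ m * T) :
    k * c + 1 ≤ k * (k - 1) + (m - k) * k + T := by
  obtain ⟨k, rfl⟩ : ∃ k', k = k' + 1 := ⟨k - 1, by omega⟩
  obtain ⟨j, rfl⟩ : ∃ j, m = k + 1 + j := ⟨m - (k + 1), by omega⟩
  simp only [Nat.add_sub_cancel, show k + 1 + j - (k + 1) = j by omega,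
    show k + 1 + j - 1 = k + j by omega] at h1 ⊢
  by_contra! h
  nlinarith

theorem sum_eq_add_of_eq_add_single {D D' : ℕ → ℕ} {t p : ℕ}
    (hD : D = D' + Pi.single t 1 + Pi.single p 1) (s : Finset ℕ) :
    ∑ i ∈ s, D i = ∑ i ∈ s, D' i + (if t ∈ s then 1 else 0) + (if p ∈ s then 1 else 0) := by
  subst hD
  simp only [Pi.add_apply, sum_add_distrib, sum_pi_single']

namespace Antitone

variable {D : ℕ → ℕ} {t : ℕ}

theorem apply_eq_of_le (hD : Antitone D) (ht : D t = D 0) {i : ℕ} (hi : i ≤ t) : D i = D 0 :=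
  le_antisymm (hD (Nat.zero_le i)) (ht ▸ hD hi)

theorem sum_range_eq_mul (hD : Antitone D) (ht : D t = D 0) {k : ℕ} (hk : k ≤ t + 1) :
    ∑ i ∈ range k, D i = k * D 0 := by
  rw [sum_congr rfl fun i hi => hD.apply_eq_of_le ht (by rw [mem_range] at hi; omega), sum_const,
    card_range, smul_eq_mul]

theorem sum_Ico_min_eq (hD : Antitone D) (ht : D t = D 0) {k n : ℕ} (hk : k ≤ t + 1)
    (htn : t + 1 ≤ n) :
    ∑ i ∈ Ico k n, min k (D i) =
      (t + 1 - k) * min k (D 0) + ∑ i ∈ Ico (t + 1) n, min k (D i) := by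
  rw [← sum_Ico_consecutive _ hk htn, sum_congr rfl fun i hi =>
    by rw [hD.apply_eq_of_le ht (by rw [mem_Ico] at hi; omega)], sum_const, Nat.card_Ico,
    smul_eq_mul]

end Antitone

def erdosGallaiBound (n : ℕ) (D : ℕ → ℕ) (k : ℕ) : ℕ :=
  k * (k - 1) + ∑ i ∈ Ico k n, min k (D i)

def ErdosGallai (n : ℕ) (D : ℕ → ℕ) : Prop :=
  ∀ k ≤ n, ∑ i ∈ range k, D i ≤ erdosGallaiBound n D k

theorem ErdosGallai.apply_zero_le {n : ℕ} {D : ℕ → ℕ} (hEG : ErdosGallai n D) (hn : 0 < n)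
    {p : ℕ} (hzero : ∀ i, p < i → D i = 0) : D 0 ≤ p := by
  have h1 := hEG 1 hn
  simp only [erdosGallaiBound, range_one, sum_singleton, Nat.sub_self, mul_zero, zero_add] at h1
  calc D 0 ≤ ∑ i ∈ Ico 1 n, min 1 (D i) := h1
    _ ≤ ∑ i ∈ Ico 1 (p + 1), min 1 (D i) := sum_le_sum_of_ne_zero fun i hi hne => by
        rw [mem_Ico] at hi ⊢
        exact ⟨hi.1, by by_contra h; exact hne (by rw [hzero i (by omega)]; rfl)⟩
    _ ≤ #(Ico 1 (p + 1)) • 1 := sum_le_card_nsmul _ _ _ fun _ _ => min_le_left _ _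
    _ = p := by simp

/-- `t` ends the leading block of maximal entries (cut off before `p`) and `p` is the last
positive entry: Choudum's reduction lowers `D t` and `D p` by one. -/
structure IsPivotPair (n : ℕ) (D : ℕ → ℕ) (t p : ℕ) : Prop where
  lt : t < p
  lt_length : p < n
  apply_eq_apply_zero : D t = D 0
  apply_lt_apply_zero : ∀ i, t < i → i < p → D i < D 0
  pos : 0 < D p
  eq_zero : ∀ i, p < i → D i = 0
  apply_zero_le : D 0 ≤ p

theorem exists_isPivotPair {n : ℕ} {D : ℕ → ℕ} (hanti : Antitone D)
    (hsupp : ∀ i, n ≤ i → D i = 0) (hEG : ErdosGallai n D) (h0 : 0 < D 0) :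
    ∃ t p, IsPivotPair n D t p := by
  obtain ⟨p, hp, hpn, hzero⟩ : ∃ p, 0 < D p ∧ p < n ∧ ∀ i, p < i → D i = 0 := by
    have hspec := Nat.findGreatest_spec (P := fun i => 0 < D i) (Nat.zero_le n) h0
    refine ⟨_, hspec, (Nat.findGreatest_le n).lt_of_ne fun h => ?_, fun i hi => ?_⟩
    · rw [h, hsupp n le_rfl] at hspec
      exact hspec.false
    · by_cases hin : i ≤ n
      · exact Nat.eq_zero_of_not_pos
          (Nat.findGreatest_is_greatest (P := fun i => 0 < D i) hi hin)
      · exact hsupp i (by omega)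
  have hcp := hEG.apply_zero_le (by omega) hzero
  have hspec := Nat.findGreatest_spec (P := fun i => D i = D 0) (Nat.zero_le (p - 1)) rfl
  refine ⟨_, p, ⟨?_, hpn, hspec, fun i hti hip => ?_, hp, hzero, hcp⟩⟩
  · have := Nat.findGreatest_le (P := fun i => D i = D 0) (p - 1)
    omega
  · exact (hanti (Nat.zero_le i)).lt_of_ne
      (Nat.findGreatest_is_greatest (P := fun i => D i = D 0) hti (by omega))

namespace IsPivotPair

variable {n t p : ℕ} {D : ℕ → ℕ}

theorem eq_add_single (hP : IsPivotPair n D t p) (hanti : Antitone D) :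
    D = (D - Pi.single t 1 - Pi.single p 1) + Pi.single t 1 + Pi.single p 1 := by
  have ht : 0 < D t := hP.apply_eq_apply_zero ▸ hP.pos.trans_le (hanti (Nat.zero_le p))
  have hp := hP.pos
  have htp := hP.lt.ne
  funext i
  simp only [Pi.add_apply, Pi.sub_apply, Pi.single_apply]
  split_ifs <;> subst_vars <;> omega

theorem antitone_sub (hP : IsPivotPair n D t p) (hanti : Antitone D) :
    Antitone (D - Pi.single t 1 - Pi.single p 1) := by
  intro i j hij
  rcases hij.eq_or_lt with rfl | hij
  · rfl
  have hle := hanti hij.le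
  have hpos := hP.pos
  have hzero : p < j → D j = 0 := hP.eq_zero j
  have hdrop : i = t → j ≠ p → D j < D t := fun hit hjp => by
    rw [hP.apply_eq_apply_zero]
    rcases lt_or_gt_of_ne hjp with hjp | hjp
    · exact hP.apply_lt_apply_zero j (hit ▸ hij) hjp
    · rw [hzero hjp]; exact hpos.trans_le (hanti (Nat.zero_le p))
  simp only [Pi.sub_apply, Pi.single_apply]
  split_ifs <;> subst_vars <;> omega

theorem erdosGallaiBound_le (hP : IsPivotPair n D t p) (hanti : Antitone D) (k : ℕ) :
    erdosGallaiBound n D k ≤ erdosGallaiBound n (D - Pi.single t 1 - Pi.single p 1) k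
      + (if D 0 ≤ k ∧ k ≤ t then 1 else 0) + (if D p ≤ k ∧ k ≤ p then 1 else 0) := by
  have hD := hP.eq_add_single hanti
  generalize D - Pi.single t 1 - Pi.single p 1 = D' at hD ⊢
  have hpoint : ∀ i, min k (D i) ≤ min k (D' i)
      + (Pi.single t (if D 0 ≤ k then 1 else 0) : ℕ → ℕ) i
      + (Pi.single p (if D p ≤ k then 1 else 0) : ℕ → ℕ) i := fun i => by
    have hi := congrFun hD i
    have ht := hP.apply_eq_apply_zero
    have htp := hP.lt
    clear hD
    simp only [Pi.add_apply, Pi.single_apply] at hi ⊢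
    split_ifs at hi ⊢ <;> subst_vars <;> omega
  have hsum := sum_le_sum fun i (_ : i ∈ Ico k n) => hpoint i
  simp only [sum_add_distrib, sum_pi_single', mem_Ico] at hsum
  have := hP.lt
  have := hP.lt_length
  unfold erdosGallaiBound
  split_ifs at hsum ⊢ <;> omega

theorem mul_add_le_erdosGallaiBound (hP : IsPivotPair n D t p) (hanti : Antitone D)
    (heven : Even (∑ i ∈ range n, D i)) (hEG : ErdosGallai n D) {k : ℕ} (hkt : k ≤ t) :
    k * D 0 + (if D 0 ≤ k then 1 else 0) + (if D p ≤ k then 1 else 0) ≤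
      erdosGallaiBound n D k := by
  have ht := hP.apply_eq_apply_zero
  have htn : t + 1 ≤ n := by have := hP.lt; have := hP.lt_length; omega
  have hpI : p ∈ Ico (t + 1) n := mem_Ico.2 ⟨hP.lt, hP.lt_length⟩
  have hDp := hP.pos
  have hsplit := hanti.sum_Ico_min_eq ht (by omega : k ≤ t + 1) htn
  by_cases hck : D 0 ≤ k
  · -- Here every entry is at most `k`; parity rules out the one configuration without slack.
    have hpk : D p ≤ k := (hanti (Nat.zero_le p)).trans hck
    set S := ∑ i ∈ Ico (t + 1) n, D i
    have hT : ∑ i ∈ Ico (t + 1) n, min k (D i) = S :=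
      sum_congr rfl fun i _ => min_eq_right ((hanti (Nat.zero_le i)).trans hck)
    have htotal : ∑ i ∈ range n, D i = (k + (t + 1 - k)) * D 0 + S := by
      rw [← sum_range_add_sum_Ico _ htn, hanti.sum_range_eq_mul ht le_rfl,
        Nat.add_sub_cancel' (by omega)]
    have hS : 0 < S := hDp.trans_le (single_le_sum (fun _ _ => Nat.zero_le _) hpI)
    rw [if_pos hck, if_pos hpk, erdosGallaiBound, hsplit, min_eq_right hck, hT, ← add_assoc]
    exact Nat.add_two_le_of_even (hDp.trans_le (hanti (Nat.zero_le p))) hck (by omega) hS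
      (htotal ▸ heven)
  by_cases hpk : D p ≤ k
  · -- Rescale the inequality at `t + 1` by `k / (t + 1)`: the term of `D p ≤ k` is not cut
    -- down by `min`, which makes the gain strict.
    rw [if_neg hck, if_pos hpk, add_zero, erdosGallaiBound, hsplit, min_eq_left (by omega),
      ← add_assoc]
    have h1 := hEG (t + 1) htn
    rw [hanti.sum_range_eq_mul ht le_rfl, erdosGallaiBound, hanti.sum_Ico_min_eq ht le_rfl htn,
      Nat.sub_self, zero_mul, zero_add] at h1
    refine Nat.mul_add_one_le_of_mul_le_add (hDp.trans_le hpk) (by omega) h1 ?_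
    rw [← add_sum_erase _ _ hpI, ← add_sum_erase _ _ hpI, min_eq_right hpk,
      min_eq_right (by omega), mul_add, mul_add]
    have hrest : k * ∑ i ∈ (Ico (t + 1) n).erase p, min (t + 1) (D i)
        ≤ (t + 1) * ∑ i ∈ (Ico (t + 1) n).erase p, min k (D i) := by
      rw [mul_sum, mul_sum]
      exact sum_le_sum fun i _ => Nat.mul_min_le_mul_min _ (by omega)
    have : k * D p + 1 ≤ (t + 1) * D p := by nlinarith
    omega
  · rw [if_neg hck, if_neg hpk]
    simpa [hanti.sum_range_eq_mul ht (by omega : k ≤ t + 1)] using hEG k (by omega)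

theorem erdosGallai_sub (hP : IsPivotPair n D t p) (hanti : Antitone D)
    (heven : Even (∑ i ∈ range n, D i)) (hEG : ErdosGallai n D) :
    ErdosGallai n (D - Pi.single t 1 - Pi.single p 1) := by
  intro k hk
  have hloss := hP.erdosGallaiBound_le hanti k
  have hsum := sum_eq_add_of_eq_add_single (hP.eq_add_single hanti) (range k)
  have := hP.lt
  simp only [mem_range] at hsum
  rcases lt_or_ge t k with htk | hkt
  · have := hEG k hk
    split_ifs at hloss hsum <;> omega
  · have := hP.mul_add_le_erdosGallaiBound hanti heven hEG hkt
    rw [hanti.sum_range_eq_mul hP.apply_eq_apply_zero (by omega)] at hsum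
    split_ifs at hloss hsum this <;> omega

theorem isGraphicSeq_of_sub (hP : IsPivotPair n D t p) (hanti : Antitone D)
    (hG : IsGraphicSeq fun i : Fin n => (D - Pi.single t 1 - Pi.single p 1 : ℕ → ℕ) i) :
    IsGraphicSeq fun i : Fin n => D i := by
  obtain ⟨G, _, hG⟩ := hG
  have hD := hP.eq_add_single hanti
  generalize D - Pi.single t 1 - Pi.single p 1 = D' at hD hG
  replace hG : ∀ v, G.degree v = D' v := hG
  have hDi : ∀ i, D i = D' i + (if i = t then 1 else 0) + (if i = p then 1 else 0) := fun i => by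
    simp [hD, Pi.single_apply]
  have htp := hP.lt
  have hpn := hP.lt_length
  set a : Fin n := ⟨t, htp.trans hpn⟩
  set b : Fin n := ⟨p, hpn⟩
  have hdeg_a : G.degree a + 1 = D 0 := by
    rw [hG, ← hP.apply_eq_apply_zero, hDi t, if_pos rfl, if_neg htp.ne]
  -- `a` has degree `D 0 - 1 < p`, so it misses one of the `p` other vertices of index `≤ p`.
  obtain ⟨x, hxX, hxN⟩ : ∃ x ∈ ({v : Fin n | v.val < p + 1} : Finset (Fin n)).erase a,
      x ∉ G.neighborFinset a := by
    apply exists_mem_notMem_of_card_lt_card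
    rw [card_erase_of_mem (by simp [a]; omega), Fin.card_filter_val_lt,
      SimpleGraph.card_neighborFinset_eq_degree]
    have := hP.apply_zero_le
    omega
  obtain ⟨hxa, hxp⟩ : x ≠ a ∧ x.val < p + 1 := by simpa using hxX
  have hx : x = b ∨ G.degree b < G.degree x := by
    rcases (Nat.lt_succ_iff.1 hxp).lt_or_eq with hxp | hxp
    · have hx := hDi x
      have hp := hDi p
      rw [if_neg fun h => hxa (Fin.ext h), if_neg hxp.ne] at hx
      rw [if_neg htp.ne', if_pos rfl] at hp
      have := hanti hxp.le
      right
      rw [hG, hG]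
      dsimp only [b]
      omega
    · exact Or.inl (Fin.ext hxp)
  obtain ⟨H, _, hH⟩ := G.exists_degree_eq_add_single_add_single
    (fun h => htp.ne (congrArg Fin.val h)) hxa (by simpa using hxN) hx
  refine ⟨H, inferInstance, fun v => ?_⟩
  show H.degree v = D v
  rw [hH, hG, hDi]
  simp [Pi.single_apply, a, b, Fin.ext_iff]

end IsPivotPair

theorem isGraphicSeq_of_erdosGallai {n : ℕ} {D : ℕ → ℕ} (hanti : Antitone D)
    (hsupp : ∀ i, n ≤ i → D i = 0) (heven : Even (∑ i ∈ range n, D i)) (hEG : ErdosGallai n D) :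
    IsGraphicSeq fun i : Fin n => D i := by
  induction hs : ∑ i ∈ range n, D i using Nat.strong_induction_on generalizing D with
  | _ s ih =>
  rcases (D 0).eq_zero_or_pos with h0 | h0
  · refine ⟨⊥, inferInstance, fun v => ?_⟩
    rw [SimpleGraph.bot_degree]
    exact (Nat.eq_zero_of_le_zero (h0 ▸ hanti (Nat.zero_le _))).symm
  obtain ⟨t, p, hP⟩ := exists_isPivotPair hanti hsupp hEG h0
  have hsum := sum_eq_add_of_eq_add_single (hP.eq_add_single hanti) (range n)
  simp only [mem_range, if_pos (hP.lt.trans hP.lt_length), if_pos hP.lt_length] at hsum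
  refine hP.isGraphicSeq_of_sub hanti (ih _ (by omega) (hP.antitone_sub hanti) (fun i hi => ?_) ?_
    (hP.erdosGallai_sub hanti heven hEG) rfl)
  · simp [hsupp i hi]
  · rw [hsum, add_assoc] at heven
    exact (Nat.even_add.1 heven).2 even_two

theorem erdos_gallai_general {n : ℕ} (d : Fin n → ℕ)
    (hmono : ∀ i j : Fin n, i ≤ j → d j ≤ d i) :
    IsGraphicSeq d ↔
      (Even (∑ i, d i) ∧
        ∀ k : ℕ, 1 ≤ k → k ≤ n →
          ∑ i ∈ Finset.univ.filter (fun i : Fin n => i.val < k), d i ≤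
            k * (k - 1) +
              ∑ i ∈ Finset.univ.filter (fun i : Fin n => k ≤ i.val), min k (d i)) := by
  constructor
  · rintro ⟨G, _, hG⟩
    refine ⟨?_, fun k _ hk => ?_⟩
    · simp only [← hG, G.sum_degrees_eq_twice_card_edges, even_two_mul]
    · have := G.sum_degree_le_card_mul_add_sum_compl_min {i : Fin n | i.val < k}
      rw [Fin.card_filter_val_lt, min_eq_right hk, compl_filter] at this
      simpa [hG, not_lt] using this
  · rintro ⟨heven, hEG⟩
    set D : ℕ → ℕ := fun j => if h : j < n then d ⟨j, h⟩ else 0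
    have hdD : ∀ i : Fin n, D i = d i := fun i => dif_pos i.isLt
    have hEGD : ErdosGallai n D := fun k hk => by
      rcases k.eq_zero_or_pos with rfl | hk0
      · simp
      simpa only [erdosGallaiBound, ← hdD, Fin.sum_filter_val_lt hk D,
        Fin.sum_filter_le_val k fun j => min k (D j)] using hEG k hk0 hk
    have hD : IsGraphicSeq fun i : Fin n => D i :=
      isGraphicSeq_of_erdosGallai (Fin.antitone_dite fun i j => hmono i j)
        (fun i hi => dif_neg (by omega)) (by simpa [← Fin.sum_univ_eq_sum_range, hdD] using heven)
        hEGD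
    simpa only [hdD] using hD

/-- Erdős–Gallai: a nonincreasing sequence of positive integers is graphic iff its sum is
even and the Erdős–Gallai inequalities hold for every `1 ≤ k ≤ n`. -/
theorem erdos_gallai {n : ℕ} (d : Fin n → ℕ)
    (hmono : ∀ i j : Fin n, i ≤ j → d j ≤ d i) (hpos : ∀ i, 0 < d i) :
    IsGraphicSeq d ↔
      (Even (∑ i, d i) ∧
        ∀ k : ℕ, 1 ≤ k → k ≤ n →
          ∑ i ∈ Finset.univ.filter (fun i : Fin n => i.val < k), d i ≤
            k * (k - 1) +
              ∑ i ∈ Finset.univ.filter (fun i : Fin n => k ≤ i.val), min k (d i)) :=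
  erdos_gallai_general d hmono
end

section
/- Let a ≥ b > 0 be integers with a - b < 2, and let d be a nonincreasing sequence of length n with a ≥ d₁ and dₙ ≥ b. If (a-b)·n/2 < n - 2, then for every s with 1 ≤ s < n/2, the inequality Σ_{i=1}^s dᵢ < s(n-s-1) + Σ_{i=0}^{s-1} d_{n-i} holds. -/
/-- If `a ≥ b > 0`, `a - b < 2`, `d` is nonincreasing with entries between `b` and `a`,
and `(a-b)·n/2 < n-2` (stated as `(a-b)·n < 2(n-2)`), then all the Rao–Rao connectivity
inequalities hold: for every `1 ≤ s < n/2`,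
`Σ_{i<s} dᵢ < s(n-s-1) + (sum of the last s entries of d)`. -/
theorem rao_inequalities_hold {a b n : ℕ} (hb : 0 < b) (hba : b ≤ a) (hab : a - b < 2)
    (d : Fin n → ℕ) (hmono : ∀ i j : Fin n, i ≤ j → d j ≤ d i)
    (hub : ∀ i, d i ≤ a) (hlb : ∀ i, b ≤ d i)
    (h : (a - b) * n < 2 * (n - 2)) :
    ∀ s : ℕ, 1 ≤ s → 2 * s < n →
      ∑ i ∈ Finset.univ.filter (fun i : Fin n => i.val < s), d i <
        s * (n - s - 1) +
          ∑ i ∈ Finset.univ.filter (fun i : Fin n => n - s ≤ i.val), d i := by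
  intro s hs1 hs2
  have hsn : s < n := by omega
  have hc1 : (Finset.univ.filter (fun i : Fin n => i.val < s)).card = s := by
    have : Finset.univ.filter (fun i : Fin n => i.val < s) = Finset.Iio ⟨s, hsn⟩ := by
      ext i; simp [Fin.lt_def]
    rw [this, Fin.card_Iio]
  have hc2 : (Finset.univ.filter (fun i : Fin n => n - s ≤ i.val)).card = s := by
    have hn : n - s < n := by omega
    have : Finset.univ.filter (fun i : Fin n => n - s ≤ i.val) = Finset.Ici ⟨n - s, hn⟩ := by
      ext i; simp [Fin.le_def]
    rw [this, Fin.card_Ici]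
    simp
    omega
  have hup : ∑ i ∈ Finset.univ.filter (fun i : Fin n => i.val < s), d i ≤ s * a := by
    calc ∑ i ∈ Finset.univ.filter (fun i : Fin n => i.val < s), d i
        ≤ ∑ i ∈ Finset.univ.filter (fun i : Fin n => i.val < s), a :=
          Finset.sum_le_sum fun i _ => hub i
      _ = s * a := by rw [Finset.sum_const, hc1, smul_eq_mul]
  have hlo : s * b ≤ ∑ i ∈ Finset.univ.filter (fun i : Fin n => n - s ≤ i.val), d i := by
    calc s * b = ∑ i ∈ Finset.univ.filter (fun i : Fin n => n - s ≤ i.val), b := by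
          rw [Finset.sum_const, hc2, smul_eq_mul]
      _ ≤ _ := Finset.sum_le_sum fun i _ => hlb i
  have key : s * a < s * (n - s - 1) + s * b := by
    have hcase : a = b ∨ a = b + 1 := by omega
    rcases hcase with h0 | h1
    · have : a = b := by omega
      subst this
      have : 1 ≤ n - s - 1 := by omega
      nlinarith
    · subst h1
      have hh : b + 1 - b = 1 := by omega
      rw [hh, one_mul] at h
      have hn5 : 4 < n := by omega
      have h2 : 2 ≤ n - s - 1 := by omega
      nlinarith
  omega
end

section
/- For n ≥ 7 and any integer x with 4 ≤ x ≤ n-3 such that (n-4)·x is even, the sequence d = (n-1, n-1, x, x, …, x, 2, 2) of length n (with n-4 copies of x) is graphic. -/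
/-!
The two entries `n - 1` are vertices adjacent to all others. Adding such a vertex to a realization
of `l` realizes `l.length :: l.map (· + 1)`, so it suffices to apply this twice to the disjoint
union of an `(x - 2)`-regular graph on `n - 4` vertices and two isolated vertices. The regular graph
is a circulant graph on `ZMod (n - 4)`, whose jumps form a set of `x - 2` nonzero residues closed
under negation: `±1, …, ±(x - 2)/2`, or, when `x - 2` is odd (so `n - 4` is even), the `x - 2`
consecutive residues centred at `(n - 4)/2`.
-/

/-- A finite list of naturals is graphic if it is realized as the degree sequence of a
simple graph. -/
def IsGraphicList (l : List ℕ) : Prop :=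
  ∃ (G : SimpleGraph (Fin l.length)) (_ : DecidableRel G.Adj), ∀ i, G.degree i = l.get i

open Finset

namespace SimpleGraph

section Sum

variable {V W : Type*} [DecidableEq V] [DecidableEq W] (G : SimpleGraph V) (H : SimpleGraph W)
  [LocallyFinite G] [LocallyFinite H]

theorem degree_sum_inl (v : V) : (G ⊕g H).degree (.inl v) = G.degree v := by
  have : (G ⊕g H).neighborFinset (.inl v) = (G.neighborFinset v).map .inl := by
    ext (w | w) <;> simp
  rw [← card_neighborFinset_eq_degree, this, card_map, card_neighborFinset_eq_degree]

theorem degree_sum_inr (w : W) : (G ⊕g H).degree (.inr w) = H.degree w := by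
  have : (G ⊕g H).neighborFinset (.inr w) = (H.neighborFinset w).map .inr := by
    ext (v | v) <;> simp
  rw [← card_neighborFinset_eq_degree, this, card_map, card_neighborFinset_eq_degree]

end Sum

section Cone

variable {V : Type*}

def cone (G : SimpleGraph V) : SimpleGraph (Option V) where
  Adj
    | some a, some b => G.Adj a b
    | none, none => False
    | _, _ => True
  symm := ⟨by rintro (_ | a) (_ | b) <;> simp [G.adj_comm]⟩
  loopless := ⟨by rintro (_ | a) <;> simp⟩

variable (G : SimpleGraph V)

@[simp] theorem cone_adj_some_some {a b : V} : (cone G).Adj (some a) (some b) ↔ G.Adj a b := .rfl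
@[simp] theorem cone_adj_none_some {b : V} : (cone G).Adj none (some b) := trivial
@[simp] theorem cone_adj_some_none {a : V} : (cone G).Adj (some a) none := trivial

instance [DecidableRel G.Adj] : DecidableRel (cone G).Adj
  | some a, some b => inferInstanceAs (Decidable (G.Adj a b))
  | none, none => isFalse ((cone G).loopless.irrefl none)
  | none, some _ => isTrue trivial
  | some _, none => isTrue trivial

variable [Fintype V] [DecidableRel G.Adj]

theorem degree_cone_none : (cone G).degree none = Fintype.card V := by
  classical
  have : (cone G).neighborFinset none = univ.erase none := by
    ext (_ | w) <;> simp
  rw [← card_neighborFinset_eq_degree, this, card_erase_of_mem (mem_univ _), card_univ,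
    Fintype.card_option, Nat.add_sub_cancel]

theorem degree_cone_some (v : V) : (cone G).degree (some v) = G.degree v + 1 := by
  have : (cone G).neighborFinset (some v) = insertNone (G.neighborFinset v) := by
    ext (_ | w) <;> simp
  rw [← card_neighborFinset_eq_degree, this, card_insertNone, card_neighborFinset_eq_degree]

end Cone

theorem degree_circulantGraph {G : Type*} [AddGroup G] [Fintype G] [DecidableEq G]
    (S : Finset G) (hneg : ∀ z ∈ S, -z ∈ S) (hzero : (0 : G) ∉ S) (u : G) :
    (circulantGraph (S : Set G)).degree u = #S := by
  have : (circulantGraph (S : Set G)).neighborFinset u = S.map (addRightEmbedding u) := by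
    ext v
    simp only [mem_neighborFinset, circulantGraph_adj, mem_coe, mem_map, addRightEmbedding_apply]
    constructor
    · rintro ⟨-, h | h⟩
      · exact ⟨-(u - v), hneg _ h, by simp⟩
      · exact ⟨v - u, h, by simp⟩
    · rintro ⟨z, hz, rfl⟩
      exact ⟨fun h => hzero (by rwa [add_eq_right.mp h.symm] at hz), Or.inr (by simpa using hz)⟩
  rw [← card_neighborFinset_eq_degree, this, card_map]

end SimpleGraph

theorem exists_symmetric_finset_nat {m k : ℕ} (hk : k < m) (hpar : Even (m * k)) :
    ∃ A : Finset ℕ, #A = k ∧ (∀ v ∈ A, 0 < v ∧ v < m) ∧ ∀ v ∈ A, m - v ∈ A := by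
  obtain ⟨h, rfl | rfl⟩ := Nat.even_or_odd' k
  · refine ⟨Icc 1 h ∪ Icc (m - h) (m - 1), ?_, ?_, ?_⟩
    · rw [card_union_of_disjoint (disjoint_left.2 fun v hv hv' => by
        rw [mem_Icc] at hv hv'; omega), Nat.card_Icc, Nat.card_Icc]
      omega
    all_goals intro v hv; simp only [mem_union, mem_Icc] at hv ⊢; omega
  · obtain ⟨c, rfl⟩ : Even m := (Nat.even_mul.mp hpar).resolve_right (by simp)
    refine ⟨Icc (c - h) (c + h), by rw [Nat.card_Icc]; omega, ?_, ?_⟩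
    all_goals intro v hv; simp only [mem_Icc] at hv ⊢; omega

theorem ZMod.exists_symmetric_finset {m k : ℕ} [NeZero m] (hk : k < m) (hpar : Even (m * k)) :
    ∃ S : Finset (ZMod m), #S = k ∧ (∀ z ∈ S, -z ∈ S) ∧ (0 : ZMod m) ∉ S := by
  obtain ⟨A, hcard, hrange, hsymm⟩ := exists_symmetric_finset_nat hk hpar
  have hinj : Set.InjOn (Nat.cast : ℕ → ZMod m) A := fun a ha b hb hab => by
    simpa [ZMod.val_cast_of_lt (hrange a ha).2, ZMod.val_cast_of_lt (hrange b hb).2]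
      using congrArg ZMod.val hab
  refine ⟨A.image Nat.cast, by rw [card_image_of_injOn hinj, hcard], ?_, ?_⟩
  · simp only [mem_image, forall_exists_index, and_imp, forall_apply_eq_imp_iff₂]
    intro v hv
    refine ⟨m - v, hsymm v hv, ?_⟩
    rw [Nat.cast_sub (hrange v hv).2.le, ZMod.natCast_self, zero_sub]
  · simp only [mem_image, not_exists, not_and]
    intro v hv h0
    obtain ⟨hpos, hlt⟩ := hrange v hv
    exact hlt.not_ge (Nat.le_of_dvd hpos ((ZMod.natCast_eq_zero_iff v m).mp h0))

namespace IsGraphicList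

theorem of_equiv {V : Type*} (G : SimpleGraph V) [G.LocallyFinite] {l : List ℕ}
    (e : V ≃ Fin l.length) (h : ∀ v, G.degree v = l.get (e v)) : IsGraphicList l := by
  classical
  let f : G ≃g G.comap e.symm := ⟨e, by simp⟩
  refine ⟨G.comap e.symm, inferInstance, fun i => ?_⟩
  have := f.degree_eq (e.symm i)
  rw [show f (e.symm i) = i from e.apply_symm_apply i] at this
  rw [this, h, e.apply_symm_apply]

theorem append {l₁ l₂ : List ℕ} (h₁ : IsGraphicList l₁) (h₂ : IsGraphicList l₂) :
    IsGraphicList (l₁ ++ l₂) := by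
  obtain ⟨G₁, _, hG₁⟩ := h₁
  obtain ⟨G₂, _, hG₂⟩ := h₂
  refine of_equiv (G₁ ⊕g G₂) (finSumFinEquiv.trans (finCongr List.length_append.symm)) ?_
  rintro (i | i)
  · simp [SimpleGraph.degree_sum_inl, hG₁, List.getElem_append_left]
  · simp [SimpleGraph.degree_sum_inr, hG₂, List.getElem_append_right]

theorem cons_length_map_succ {l : List ℕ} (hl : IsGraphicList l) :
    IsGraphicList (l.length :: l.map (· + 1)) := by
  obtain ⟨G, _, hG⟩ := hl
  refine of_equiv G.cone ((finSuccEquiv _).symm.trans (finCongr (by simp))) ?_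
  rintro (_ | i)
  · simp [SimpleGraph.degree_cone_none]
  · simp [SimpleGraph.degree_cone_some, hG]

theorem replicate {m k : ℕ} (hk : k < m) (hpar : Even (m * k)) :
    IsGraphicList (List.replicate m k) := by
  have : NeZero m := ⟨by omega⟩
  obtain ⟨S, hcard, hneg, hzero⟩ := ZMod.exists_symmetric_finset hk hpar
  refine of_equiv (SimpleGraph.circulantGraph (S : Set (ZMod m)))
    ((ZMod.finEquiv m).symm.toEquiv.trans (finCongr List.length_replicate.symm)) fun v => ?_
  simp [SimpleGraph.degree_circulantGraph S hneg hzero, hcard]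

end IsGraphicList

theorem seq_k2_graphic_general {n x : ℕ} (hx4 : 4 ≤ x) (hxn : x ≤ n - 3)
    (hpar : Even ((n - 4) * x)) :
    IsGraphicList ([n - 1, n - 1] ++ List.replicate (n - 4) x ++ [2, 2]) := by
  obtain ⟨m, rfl⟩ : ∃ m, n = m + 4 := ⟨n - 4, by omega⟩
  obtain ⟨k, rfl⟩ : ∃ k, x = k + 2 := ⟨x - 2, by omega⟩
  have hmk : Even (m * k) := by
    simpa [Nat.add_sub_cancel, mul_add, Nat.even_add] using hpar
  have hbase : IsGraphicList (List.replicate m k ++ List.replicate 2 0) :=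
    (IsGraphicList.replicate (by omega) hmk).append (IsGraphicList.replicate (by norm_num) (by simp))
  simpa using hbase.cons_length_map_succ.cons_length_map_succ

/-- For `n ≥ 7` and `4 ≤ x ≤ n-3` with `(n-4)·x` even, the sequence
`(n-1, n-1, x, …, x, 2, 2)` of length `n` (with `n-4` copies of `x`) is graphic. -/
theorem seq_k2_graphic {n x : ℕ} (hn : 7 ≤ n) (hx4 : 4 ≤ x) (hxn : x ≤ n - 3)
    (hpar : Even ((n - 4) * x)) :
    IsGraphicList ([n - 1, n - 1] ++ List.replicate (n - 4) x ++ [2, 2]) :=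
  seq_k2_graphic_general hx4 hxn hpar
end

section
/- Let G be a multigraph on vertex set V formed as the superposition of two simple graphs A and B with deg_A(vᵢ) + deg_B(vᵢ) = n - 1 - k for all i, where k ≥ 0. If there is a multiedge between u and v (i.e., uv ∈ A ∩ B), then there exist vertices x and y with: x not adjacent to v in A ∪ B, x adjacent to y in one of A or B by an edge, and u joined to y by strictly fewer parallel edges than x is joined to y; so that switching edges {u,v} and {x,y} to {v,x} and {u,y} in that graph strictly decreases the total number of multiedges. -/
/-- The edge switch replacing edges `{u,v}` and `{x,y}` by `{v,x}` and `{u,y}` in a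
simple graph `H`. -/
def switchGraph {V : Type*} (H : SimpleGraph V) (u v x y : V) : SimpleGraph V :=
  SimpleGraph.fromEdgeSet ((H.edgeSet \ {s(u, v), s(x, y)}) ∪ {s(v, x), s(u, y)})

/-- The number of parallel edges between `p` and `q` in the superposition of two simple
graphs `A` and `B`. -/
def edgeMult {V : Type*} (A B : SimpleGraph V)
    [DecidableRel A.Adj] [DecidableRel B.Adj] (p q : V) : ℕ :=
  (if A.Adj p q then 1 else 0) + (if B.Adj p q then 1 else 0)

/-!
Since `u` is a common neighbour of `v` in `A` and `B`, `v` has at most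
`deg_A v + deg_B v - 1 ≤ n - 2` neighbours in `A ∪ B`, so some `x ≠ v` is not adjacent to `v`.
Now `u` and `x` have the same multidegree, and `u` sends two parallel edges to `v` while `x`
sends none, so some `y` receives strictly more edges from `x` than from `u`. This gives an edge
`xy` in one of the graphs, say `A`, with `uy ∉ B`; as `vx ∉ B` as well, switching in `A` destroys
the multiedge `uv` and creates none.
-/

theorem Fintype.exists_lt_of_sum_eq_of_lt {ι M : Type*} [Fintype ι] [AddCommMonoid M]
    [LinearOrder M] [IsOrderedCancelAddMonoid M] {f g : ι → M}
    (hsum : ∑ j, f j = ∑ j, g j) {i : ι} (hi : g i < f i) : ∃ j, f j < g j := by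
  by_contra! h
  exact (Finset.sum_lt_sum (fun j _ => h j) ⟨i, Finset.mem_univ i, hi⟩).ne' hsum

namespace SimpleGraph

variable {V : Type*}

theorem edgeSet_switchGraph_subset (H : SimpleGraph V) (u v x y : V) :
    (switchGraph H u v x y).edgeSet ⊆ (H.edgeSet \ {s(u, v)}) ∪ {s(v, x), s(u, y)} := by
  rw [switchGraph, edgeSet_fromEdgeSet]
  exact Set.sdiff_subset.trans
    (Set.union_subset_union_left _ (Set.sdiff_subset_sdiff_right (by simp)))

theorem ncard_edgeSet_switchGraph_inf_lt [Finite V] {H K : SimpleGraph V} {u v x y : V}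
    (hH : H.Adj u v) (hK : K.Adj u v) (hvx : ¬ K.Adj v x) (huy : ¬ K.Adj u y) :
    (switchGraph H u v x y ⊓ K).edgeSet.ncard < (H ⊓ K).edgeSet.ncard := by
  have hsub : (switchGraph H u v x y ⊓ K).edgeSet ⊆ (H ⊓ K).edgeSet \ {s(u, v)} := by
    intro e he
    rw [edgeSet_inf] at he
    obtain ⟨hsw, he⟩ := he
    rcases edgeSet_switchGraph_subset H u v x y hsw with ⟨heH, hne⟩ | rfl | rfl
    · exact ⟨(edgeSet_inf H K).superset ⟨heH, he⟩, hne⟩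
    · exact absurd he hvx
    · exact absurd he huy
  calc (switchGraph H u v x y ⊓ K).edgeSet.ncard
      ≤ ((H ⊓ K).edgeSet \ {s(u, v)}).ncard := Set.ncard_le_ncard hsub (Set.toFinite _)
    _ < (H ⊓ K).edgeSet.ncard :=
      Set.ncard_sdiff_singleton_lt_of_mem (show H.Adj u v ∧ K.Adj u v from ⟨hH, hK⟩)
        (Set.toFinite _)

variable {A B : SimpleGraph V} [DecidableRel A.Adj] [DecidableRel B.Adj]

theorem adj_and_not_adj_of_edgeMult_lt {u x y : V} (h : edgeMult A B u y < edgeMult A B x y) :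
    (A.Adj x y ∧ ¬ B.Adj u y) ∨ (B.Adj x y ∧ ¬ A.Adj u y) := by
  unfold edgeMult at h
  split_ifs at h <;> simp_all

variable [Fintype V]

theorem sum_edgeMult (p : V) : ∑ q, edgeMult A B p q = A.degree p + B.degree p := by
  simp only [edgeMult, Finset.sum_add_distrib]
  congr 1 <;> exact_mod_cast (degree_eq_sum_if_adj (R := ℕ) _ p).symm

theorem exists_ne_not_adj_sup_of_adj_of_adj {u v : V} (hA : A.Adj u v) (hB : B.Adj u v)
    (hdeg : A.degree v + B.degree v < Fintype.card V) : ∃ x, x ≠ v ∧ ¬ (A ⊔ B).Adj x v := by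
  classical
  have hunion : ((A ⊔ B).neighborFinset v).card + 1 ≤ A.degree v + B.degree v := by
    have hinter : 0 < (A.neighborFinset v ∩ B.neighborFinset v).card :=
      Finset.card_pos.mpr ⟨u, by simp [hA.symm, hB.symm]⟩
    rw [neighborFinset_sup, ← card_neighborFinset_eq_degree, ← card_neighborFinset_eq_degree,
      ← Finset.card_union_add_card_inter]
    omega
  have hcard : (insert v ((A ⊔ B).neighborFinset v)).card < Fintype.card V :=
    (Finset.card_insert_le _ _).trans_lt (by omega)
  obtain ⟨x, -, hx⟩ := Finset.exists_mem_notMem_of_card_lt_card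
    (hcard.trans_eq Finset.card_univ.symm)
  simp only [Finset.mem_insert, mem_neighborFinset, not_or] at hx
  exact ⟨x, hx.1, fun h => hx.2 h.symm⟩

theorem exists_edgeMult_lt_of_degree_eq {u v x : V} (hA : A.Adj u v) (hB : B.Adj u v)
    (hxv : ¬ (A ⊔ B).Adj x v) (hdeg : A.degree u + B.degree u = A.degree x + B.degree x) :
    ∃ y, edgeMult A B u y < edgeMult A B x y := by
  refine Fintype.exists_lt_of_sum_eq_of_lt (i := v) (by rw [sum_edgeMult, sum_edgeMult, hdeg]) ?_
  simp only [sup_adj, not_or] at hxv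
  simp [edgeMult, hA, hB, hxv]

end SimpleGraph

open SimpleGraph in
/-- In the superposition of simple graphs `A`, `B` on `n` vertices with
`deg_A(v) + deg_B(v) = n - 1 - k` for all `v`, if `{u,v}` is a multiedge (an edge of
both `A` and `B`), then there exist vertices `x`, `y` with `x` not adjacent to `v` in
`A ∪ B`, `x` adjacent to `y` in one of `A` or `B`, and `u` joined to `y` by strictly
fewer parallel edges than `x` is; switching `{u,v}`, `{x,y}` to `{v,x}`, `{u,y}` in the
graph containing `{x,y}` strictly decreases the total number of multiedges. -/
theorem multiedge_switch {n k : ℕ} (A B : SimpleGraph (Fin n))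
    (instA : DecidableRel A.Adj) (instB : DecidableRel B.Adj)
    (hdeg : ∀ v, A.degree v + B.degree v = n - 1 - k)
    (u v : Fin n) (hmulti : A.Adj u v ∧ B.Adj u v) :
    ∃ x y : Fin n,
      ¬ (A ⊔ B).Adj x v ∧
      edgeMult A B u y < edgeMult A B x y ∧
      ((A.Adj x y ∧
          (switchGraph A u v x y ⊓ B).edgeSet.ncard < (A ⊓ B).edgeSet.ncard) ∨
       (B.Adj x y ∧
          (A ⊓ switchGraph B u v x y).edgeSet.ncard < (A ⊓ B).edgeSet.ncard)) := by
  obtain ⟨hA, hB⟩ := hmulti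
  have hdegv : A.degree v + B.degree v < Fintype.card (Fin n) := by
    rw [hdeg, Fintype.card_fin]
    have := u.pos
    omega
  obtain ⟨x, -, hxv⟩ := exists_ne_not_adj_sup_of_adj_of_adj hA hB hdegv
  obtain ⟨y, hy⟩ := exists_edgeMult_lt_of_degree_eq hA hB hxv (by rw [hdeg, hdeg])
  have hvx : ¬ A.Adj v x ∧ ¬ B.Adj v x := by
    simpa only [sup_adj, not_or, adj_comm _ x v] using hxv
  refine ⟨x, y, hxv, hy, ?_⟩
  rcases adj_and_not_adj_of_edgeMult_lt hy with ⟨hxy, huy⟩ | ⟨hxy, huy⟩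
  · exact Or.inl ⟨hxy, ncard_edgeSet_switchGraph_inf_lt hA hB hvx.2 huy⟩
  · refine Or.inr ⟨hxy, ?_⟩
    rw [inf_comm A, inf_comm A]
    exact ncard_edgeSet_switchGraph_inf_lt hB hA hvx.1 huy
end

section
/- Suppose a ≥ b > 0 are integers with a - b < 2, and n is an integer with n > max(4/(2+b-a), (a+b+1)²/(4b)). Then every nonincreasing sequence d of length n with b ≤ dᵢ ≤ a for all i and even sum is graphic; moreover d satisfies Σ_{i=1}^s dᵢ < s(n-s-1) + Σ_{i=0}^{s-1} d_{n-i} for all 1 ≤ s < n/2. -/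
open Finset SimpleGraph

namespace CFG

lemma card_filter_val (n : ℕ) (P : ℕ → Prop) [DecidablePred P] :
    (Finset.univ.filter (fun x : Fin n => P x.val)).card = ((Finset.range n).filter P).card := by
  refine Finset.card_bij (fun i _ => i.val) ?_ ?_ ?_
  · intro a ha
    simp only [mem_filter, mem_univ, true_and] at ha
    simp only [mem_filter, mem_range]
    exact ⟨a.isLt, ha⟩
  · intro a _ b _ h
    exact Fin.ext h
  · intro x hx
    simp only [mem_filter, mem_range] at hx
    exact ⟨⟨x, hx.1⟩, by simp [hx.2], rfl⟩

lemma card_lt (n k : ℕ) (h : k ≤ n) :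
    (Finset.univ.filter (fun i : Fin n => i.val < k)).card = k := by
  rw [card_filter_val n (fun x => x < k)]
  have : (Finset.range n).filter (fun x => x < k) = Finset.range k := by
    ext x; simp only [mem_filter, mem_range]; omega
  rw [this, card_range]

lemma card_ge (n s : ℕ) (h : s ≤ n) :
    (Finset.univ.filter (fun i : Fin n => n - s ≤ i.val)).card = s := by
  rw [card_filter_val n (fun x => n - s ≤ x)]
  have : (Finset.range n).filter (fun x => n - s ≤ x) = Finset.Ico (n - s) n := by
    ext x; simp only [mem_filter, mem_range, mem_Ico]; omega
  rw [this, Nat.card_Ico]; omega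

lemma card_le_val (n : ℕ) (i : Fin n) :
    (Finset.univ.filter (fun j : Fin n => j.val ≤ i.val)).card = i.val + 1 := by
  rw [card_filter_val n (fun x => x ≤ i.val)]
  have hi := i.isLt
  have : (Finset.range n).filter (fun x => x ≤ i.val) = Finset.range (i.val + 1) := by
    ext x; simp only [mem_filter, mem_range]; omega
  rw [this, card_range]

variable {n : ℕ}

lemma neg_val [NeZero n] {x : Fin n} (hx : x.val ≠ 0) : (-x).val = n - x.val := by
  rw [Fin.coe_neg]
  exact Nat.mod_eq_of_lt (by have := x.isLt; omega)

lemma sub_one_val [NeZero n] (hn : 2 ≤ n) (v : Fin n) :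
    (v - 1).val = if v.val = 0 then n - 1 else v.val - 1 := by
  have hv := v.isLt
  rw [sub_eq_add_neg, Fin.val_add, Fin.coe_neg, Fin.val_one']
  have h1 : (1 : ℕ) % n = 1 := Nat.mod_eq_of_lt (by omega)
  have h2 : (n - 1) % n = n - 1 := Nat.mod_eq_of_lt (by omega)
  rw [h1, h2]
  split_ifs with h
  · rw [h, Nat.zero_add]; exact Nat.mod_eq_of_lt (by omega)
  · have h3 : v.val + (n - 1) = n + (v.val - 1) := by omega
    rw [h3, Nat.add_mod_left]
    exact Nat.mod_eq_of_lt (by omega)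
variable {n : ℕ}

def DGraph (D : Finset (Fin n)) : SimpleGraph (Fin n) :=
  SimpleGraph.fromRel (fun i j => j - i ∈ D)

def TGraph [NeZero n] (T : Finset (Fin n)) : SimpleGraph (Fin n) :=
  SimpleGraph.fromRel (fun i j => i ∈ T ∧ j = i + 1)

lemma DGraph_adj [NeZero n] {D : Finset (Fin n)} (hsym : ∀ x ∈ D, -x ∈ D)
    (h0 : (0 : Fin n) ∉ D) {v w : Fin n} : (DGraph D).Adj v w ↔ w - v ∈ D := by
  rw [DGraph, fromRel_adj]
  constructor
  · rintro ⟨hne, h | h⟩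
    · exact h
    · have := hsym _ h; rwa [neg_sub] at this
  · intro h
    refine ⟨fun he => h0 ?_, Or.inl h⟩
    subst he; simpa using h

lemma DGraph_degree [NeZero n] {D : Finset (Fin n)} (hsym : ∀ x ∈ D, -x ∈ D)
    (h0 : (0 : Fin n) ∉ D) [DecidableRel (DGraph D).Adj] (v : Fin n) :
    (DGraph D).degree v = D.card := by
  have hne : (DGraph D).neighborFinset v = D.image (v + ·) := by
    ext w
    rw [mem_neighborFinset, DGraph_adj hsym h0, Finset.mem_image]
    constructor
    · intro h; exact ⟨w - v, h, by abel⟩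
    · rintro ⟨x, hx, rfl⟩; rwa [add_sub_cancel_left]
  rw [← card_neighborFinset_eq_degree, hne,
    Finset.card_image_of_injective _ (add_right_injective v)]

lemma TGraph_adj [NeZero n] {T : Finset (Fin n)} {v w : Fin n} :
    (TGraph T).Adj v w ↔ v ≠ w ∧ ((v ∈ T ∧ w = v + 1) ∨ (w ∈ T ∧ v = w + 1)) := by
  rw [TGraph, fromRel_adj]

lemma TGraph_degree [NeZero n] (hn : 3 ≤ n) {T : Finset (Fin n)}
    [DecidableRel (TGraph T).Adj] (v : Fin n) :
    (TGraph T).degree v =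
      (if v ∈ T then 1 else 0) + (if v - 1 ∈ T then 1 else 0) := by
  have h10 : (1 : Fin n) ≠ 0 := by
    intro h
    have := congrArg Fin.val h
    rw [Fin.val_one', Fin.val_zero, Nat.mod_eq_of_lt (by omega)] at this
    omega
  have ha : v + 1 ≠ v := by
    rw [Ne, add_eq_left]; exact h10
  have hb : v - 1 ≠ v := by
    rw [Ne, sub_eq_self]; exact h10
  have hc : v + 1 ≠ v - 1 := by
    intro h
    have hval := congrArg Fin.val h
    have hv := v.isLt
    rw [Fin.val_add, Fin.val_one', Nat.mod_eq_of_lt (show 1 < n by omega),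
      sub_one_val (by omega)] at hval
    rcases Nat.lt_or_ge (v.val + 1) n with hlt | hge
    · rw [Nat.mod_eq_of_lt hlt] at hval; split_ifs at hval <;> omega
    · have h3 : v.val + 1 = n := by omega
      rw [h3, Nat.mod_self] at hval; split_ifs at hval <;> omega
  have hne : (TGraph T).neighborFinset v =
      (if v ∈ T then {v + 1} else ∅) ∪ (if v - 1 ∈ T then {v - 1} else ∅) := by
    ext w
    rw [mem_neighborFinset, TGraph_adj]
    constructor
    · rintro ⟨hne, ⟨hvT, rfl⟩ | ⟨hwT, hv⟩⟩
      · simp [hvT]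
      · have hw : w = v - 1 := by rw [hv]; abel
        subst hw
        simp [hwT]
    · intro hw
      rcases Finset.mem_union.mp hw with hw | hw
      · split_ifs at hw with hvT
        · rw [Finset.mem_singleton] at hw
          subst hw
          exact ⟨fun h => ha h.symm, Or.inl ⟨hvT, rfl⟩⟩
        · exact absurd hw (Finset.notMem_empty _)
      · split_ifs at hw with hvT
        · rw [Finset.mem_singleton] at hw
          subst hw
          exact ⟨fun h => hb h.symm, Or.inr ⟨hvT, by abel⟩⟩
        · exact absurd hw (Finset.notMem_empty _)
  rw [← card_neighborFinset_eq_degree, hne]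
  split_ifs with h1 h2 h2
  · rw [Finset.card_union_of_disjoint (by simp [Ne.symm hc, hc])]
    simp
  · simp
  · simp
  · simp

lemma degree_sup {V : Type*} [Fintype V] [DecidableEq V] {G H : SimpleGraph V}
    [DecidableRel G.Adj] [DecidableRel H.Adj] [DecidableRel (G ⊔ H).Adj]
    (hd : ∀ v w, G.Adj v w → ¬ H.Adj v w) (v : V) :
    (G ⊔ H).degree v = G.degree v + H.degree v := by
  have hne : (G ⊔ H).neighborFinset v = G.neighborFinset v ∪ H.neighborFinset v := by
    ext w; simp [mem_neighborFinset]
  rw [← card_neighborFinset_eq_degree, hne, Finset.card_union_of_disjoint,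
    card_neighborFinset_eq_degree, card_neighborFinset_eq_degree]
  rw [Finset.disjoint_left]
  intro w hw hw'
  exact hd v w (by simpa using hw) (by simpa using hw')

end CFG
-- Dset layer
namespace CFG
variable {n : ℕ}

def DsetP (n lo hi : ℕ) (c : Bool) (v : ℕ) : Prop :=
  (lo ≤ v ∧ v ≤ hi) ∨ (n - hi ≤ v ∧ v ≤ n - lo) ∨ (c = true ∧ 2 * v = n)

instance (n lo hi : ℕ) (c : Bool) : DecidablePred (DsetP n lo hi c) := by
  unfold DsetP; infer_instance

def Dset (n lo hi : ℕ) (c : Bool) : Finset (Fin n) :=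
  Finset.univ.filter (fun x : Fin n => DsetP n lo hi c x.val)

lemma mem_Dset {lo hi : ℕ} {c : Bool} {x : Fin n} :
    x ∈ Dset n lo hi c ↔ DsetP n lo hi c x.val := by
  simp [Dset]

lemma Dset_zero [NeZero n] {lo hi : ℕ} {c : Bool} (hlo : 1 ≤ lo) (hhi : 2 * hi < n) :
    (0 : Fin n) ∉ Dset n lo hi c := by
  rw [mem_Dset, Fin.val_zero]
  rintro (h | h | h) <;> omega

lemma Dset_one [NeZero n] {lo hi : ℕ} {c : Bool} (hlo : 2 ≤ lo) (hhi : 2 * hi < n)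
    (hn : 3 ≤ n) : (1 : Fin n) ∉ Dset n lo hi c := by
  rw [mem_Dset, Fin.val_one', Nat.mod_eq_of_lt (by omega)]
  rintro (h | h | h) <;> omega

lemma Dset_symm [NeZero n] {lo hi : ℕ} {c : Bool} (hlo : 1 ≤ lo) (hhi : 2 * hi < n) :
    ∀ x ∈ Dset n lo hi c, -x ∈ Dset n lo hi c := by
  intro x hx
  rw [mem_Dset] at hx
  have hx0 : x.val ≠ 0 := by
    rcases hx with h | h | h <;> omega
  have hxlt := x.isLt
  rw [mem_Dset, neg_val hx0]
  rcases hx with h | h | h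
  · right; left; omega
  · left; omega
  · right; right; exact ⟨h.1, by omega⟩

lemma Dset_card {lo hi : ℕ} {c : Bool} (hlo : 1 ≤ lo) (hhi : 2 * hi < n)
    (hc : c = true → n % 2 = 0) :
    (Dset n lo hi c).card = 2 * (hi + 1 - lo) + c.toNat := by
  rw [Dset, card_filter_val n (DsetP n lo hi c)]
  cases c with
  | false =>
    have he : (Finset.range n).filter (DsetP n lo hi false) =
        Finset.Icc lo hi ∪ Finset.Icc (n - hi) (n - lo) := by
      ext x
      simp only [mem_filter, mem_range, mem_union, mem_Icc, DsetP, Bool.false_eq_true,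
        false_and, or_false]
      omega
    rw [he, Finset.card_union_of_disjoint, Nat.card_Icc, Nat.card_Icc]
    · rw [Bool.toNat_false]; omega
    · rw [Finset.disjoint_left]
      intro x hx hx'
      simp only [mem_Icc] at hx hx'
      omega
  | true =>
    have hn2 := hc rfl
    have he : (Finset.range n).filter (DsetP n lo hi true) =
        (Finset.Icc lo hi ∪ Finset.Icc (n - hi) (n - lo)) ∪ {n / 2} := by
      ext x
      simp only [mem_filter, mem_range, mem_union, mem_Icc, mem_singleton, DsetP, true_and]
      omega
    rw [he, Finset.card_union_of_disjoint, Finset.card_union_of_disjoint,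
      Nat.card_Icc, Nat.card_Icc, Finset.card_singleton]
    · rw [Bool.toNat_true]; omega
    · rw [Finset.disjoint_left]
      intro x hx hx'
      simp only [mem_Icc] at hx hx'
      omega
    · rw [Finset.disjoint_left]
      intro x hx hx'
      simp only [mem_union, mem_Icc] at hx
      simp only [mem_singleton] at hx'
      omega

lemma TD_disj [NeZero n] (hn : 3 ≤ n) {T D : Finset (Fin n)}
    (hsym : ∀ x ∈ D, -x ∈ D) (h0 : (0 : Fin n) ∉ D) (h1 : (1 : Fin n) ∉ D) :
    ∀ v w : Fin n, (DGraph D).Adj v w → ¬ (TGraph T).Adj v w := by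
  intro v w hd ht
  rw [DGraph_adj hsym h0] at hd
  rw [TGraph_adj] at ht
  rcases ht.2 with ⟨-, rfl⟩ | ⟨-, rfl⟩
  · rw [add_sub_cancel_left] at hd
    exact h1 hd
  · have he : w - (w + 1) = -1 := by abel
    rw [he] at hd
    have := hsym _ hd
    rw [neg_neg] at this
    exact h1 this

end CFG
namespace CFG
variable {n : ℕ}

def Tev (n m : ℕ) : Finset (Fin n) :=
  Finset.univ.filter (fun v : Fin n => v.val < m ∧ v.val % 2 = 0)

def Todd (n m : ℕ) : Finset (Fin n) :=
  Finset.univ.filter (fun v : Fin n =>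
    v.val < m ∨ v.val = n - 1 ∨ (m < v.val ∧ v.val ≤ n - 2 ∧ (v.val - m) % 2 = 1))

lemma Tev_chi [NeZero n] {m : ℕ} (hn : 3 ≤ n) (hm : m ≤ n) (hm2 : m % 2 = 0) (v : Fin n) :
    ((if v ∈ Tev n m then 1 else 0) + (if v - 1 ∈ Tev n m then 1 else 0) : ℕ)
      = if v.val < m then 1 else 0 := by
  have hv := v.isLt
  have hs := sub_one_val (n := n) (by omega) v
  simp only [Tev, Finset.mem_filter, Finset.mem_univ, true_and, hs]
  split_ifs <;> omega

lemma Todd_chi [NeZero n] {m : ℕ} (hn : 3 ≤ n) (hm : m ≤ n) (hm2 : m % 2 = 1)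
    (hn2 : n % 2 = 1) (v : Fin n) :
    ((if v ∈ Todd n m then 1 else 0) + (if v - 1 ∈ Todd n m then 1 else 0) : ℕ)
      = if v.val < m then 2 else 1 := by
  have hv := v.isLt
  have hs := sub_one_val (n := n) (by omega) v
  simp only [Todd, Finset.mem_filter, Finset.mem_univ, true_and, hs]
  split_ifs <;> omega

lemma master (n b m : ℕ) [NeZero n] (hb : 1 ≤ b) (hm : m ≤ n) (hn : b + 2 ≤ n)
    (hn' : 1 ≤ m → b + 3 ≤ n) (hpar : (b * n + m) % 2 = 0) :
    ∃ (G : SimpleGraph (Fin n)) (_ : DecidableRel G.Adj),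
      ∀ v : Fin n, G.degree v = if v.val < m then b + 1 else b := by
  have hn3 : 3 ≤ n := by omega
  have hbn1 : n % 2 = 1 → b % 2 = 1 → b * n % 2 = 1 := fun h1 h2 =>
    Nat.odd_iff.mp (Nat.odd_mul.mpr ⟨Nat.odd_iff.mpr h2, Nat.odd_iff.mpr h1⟩)
  have hbn0 : ¬(n % 2 = 1 ∧ b % 2 = 1) → b * n % 2 = 0 := by
    intro h
    rcases Nat.even_or_odd b with hb' | hb'
    · exact Nat.even_iff.mp (hb'.mul_right n)
    · have hne : Even n := by
        rw [Nat.even_iff]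
        have := Nat.odd_iff.mp hb'
        omega
      exact Nat.even_iff.mp (hne.mul_left b)
  rcases Nat.eq_zero_or_pos m with hm0 | hm1
  · subst hm0
    rcases Nat.even_or_odd b with hbe | hbo
    · have hb2 : b % 2 = 0 := Nat.even_iff.mp hbe
      have hhi : 2 * (b / 2) < n := by omega
      haveI i0 : DecidableRel (DGraph (Dset n 1 (b / 2) false)).Adj := Classical.decRel _
      refine ⟨DGraph (Dset n 1 (b / 2) false), i0, fun v => ?_⟩
      rw [DGraph_degree (Dset_symm le_rfl hhi) (Dset_zero le_rfl hhi),
        Dset_card le_rfl hhi (by simp), Bool.toNat_false, if_neg (Nat.not_lt_zero _)]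
      omega
    · have hb2 : b % 2 = 1 := Nat.odd_iff.mp hbo
      have hn2 : n % 2 = 0 := by
        by_contra h
        have := hbn1 (by omega) hb2
        omega
      have hhi : 2 * (b / 2) < n := by omega
      haveI i0 : DecidableRel (DGraph (Dset n 1 (b / 2) true)).Adj := Classical.decRel _
      refine ⟨DGraph (Dset n 1 (b / 2) true), i0, fun v => ?_⟩
      rw [DGraph_degree (Dset_symm le_rfl hhi) (Dset_zero le_rfl hhi),
        Dset_card le_rfl hhi (fun _ => hn2), Bool.toNat_true, if_neg (Nat.not_lt_zero _)]
      omega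
  · have hn4 := hn' hm1
    have hhi : 2 * (b / 2 + 1) < n := by omega
    by_cases hno : n % 2 = 1 ∧ b % 2 = 1
    · have hbn := hbn1 hno.1 hno.2
      have hmo : m % 2 = 1 := by omega
      haveI i1 : DecidableRel (DGraph (Dset n 2 (b / 2 + 1) false)).Adj := Classical.decRel _
      haveI i2 : DecidableRel (TGraph (Todd n m) : SimpleGraph (Fin n)).Adj := Classical.decRel _
      refine ⟨DGraph (Dset n 2 (b / 2 + 1) false) ⊔ TGraph (Todd n m), ?_, fun v => ?_⟩
      · infer_instance
      rw [degree_sup (TD_disj hn3 (Dset_symm (by omega) hhi) (Dset_zero (by omega) hhi)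
          (Dset_one le_rfl hhi hn3)) v,
        DGraph_degree (Dset_symm (by omega) hhi) (Dset_zero (by omega) hhi),
        Dset_card (by omega) hhi (by simp), TGraph_degree hn3,
        Todd_chi hn3 hm hmo hno.1, Bool.toNat_false]
      split_ifs <;> omega
    · have hbn := hbn0 hno
      have hme : m % 2 = 0 := by omega
      rcases Nat.even_or_odd b with hbe | hbo
      · have hb2 : b % 2 = 0 := Nat.even_iff.mp hbe
        haveI i1 : DecidableRel (DGraph (Dset n 2 (b / 2 + 1) false)).Adj := Classical.decRel _
        haveI i2 : DecidableRel (TGraph (Tev n m) : SimpleGraph (Fin n)).Adj := Classical.decRel _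
        refine ⟨DGraph (Dset n 2 (b / 2 + 1) false) ⊔ TGraph (Tev n m), ?_, fun v => ?_⟩
        · infer_instance
        rw [degree_sup (TD_disj hn3 (Dset_symm (by omega) hhi) (Dset_zero (by omega) hhi)
            (Dset_one le_rfl hhi hn3)) v,
          DGraph_degree (Dset_symm (by omega) hhi) (Dset_zero (by omega) hhi),
          Dset_card (by omega) hhi (by simp), TGraph_degree hn3,
          Tev_chi hn3 hm hme, Bool.toNat_false]
        split_ifs <;> omega
      · have hb2 : b % 2 = 1 := Nat.odd_iff.mp hbo
        have hn2 : n % 2 = 0 := by omega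
        haveI i1 : DecidableRel (DGraph (Dset n 2 (b / 2 + 1) true)).Adj := Classical.decRel _
        haveI i2 : DecidableRel (TGraph (Tev n m) : SimpleGraph (Fin n)).Adj := Classical.decRel _
        refine ⟨DGraph (Dset n 2 (b / 2 + 1) true) ⊔ TGraph (Tev n m), ?_, fun v => ?_⟩
        · infer_instance
        rw [degree_sup (TD_disj hn3 (Dset_symm (by omega) hhi) (Dset_zero (by omega) hhi)
            (Dset_one le_rfl hhi hn3)) v,
          DGraph_degree (Dset_symm (by omega) hhi) (Dset_zero (by omega) hhi),
          Dset_card (by omega) hhi (fun _ => hn2), TGraph_degree hn3,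
          Tev_chi hn3 hm hme, Bool.toNat_true]
        split_ifs <;> omega

end CFG


/-- If `a ≥ b > 0`, `a - b < 2` and `n > max(4/(2+b-a), (a+b+1)²/(4b))` (stated as
`(2+b-a)·n > 4` and `4bn > (a+b+1)²`), then every nonincreasing sequence `d` of length
`n` with entries between `b` and `a` and even sum is graphic, and moreover satisfies the
Rao–Rao inequalities `Σ_{i=1}^s dᵢ < s(n-s-1) + Σ_{i=0}^{s-1} d_{n-i}` for all
`1 ≤ s < n/2`. -/
theorem connected_factorable_generation {a b n : ℕ} (hb : 0 < b) (hba : b ≤ a)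
    (hab : a - b < 2) (hn1 : 4 < (2 + b - a) * n) (hn2 : (a + b + 1) ^ 2 < 4 * b * n)
    (d : Fin n → ℕ) (hmono : ∀ i j : Fin n, i ≤ j → d j ≤ d i)
    (hlb : ∀ i, b ≤ d i) (hub : ∀ i, d i ≤ a) (heven : Even (∑ i, d i)) :
    IsGraphicSeq d ∧
    ∀ s : ℕ, 1 ≤ s → 2 * s < n →
      ∑ i ∈ Finset.univ.filter (fun i : Fin n => i.val < s), d i <
        s * (n - s - 1) +
          ∑ i ∈ Finset.univ.filter (fun i : Fin n => n - s ≤ i.val), d i := by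
  classical
  have hab' : a ≤ b + 1 := by omega
  have hnb2 : b + 2 ≤ n := by
    by_contra h
    push_neg at h
    have h1 : n ≤ b + 1 := by omega
    have h2 : 4 * b * n ≤ 4 * b * (b + 1) := Nat.mul_le_mul_left _ h1
    have h3 : (2 * b + 1) ^ 2 ≤ (a + b + 1) ^ 2 := Nat.pow_le_pow_left (by omega) 2
    have h4 : (2 * b + 1) ^ 2 = 4 * (b * b) + 4 * b + 1 := by ring
    have h5 : 4 * b * (b + 1) = 4 * (b * b) + 4 * b := by ring
    omega
  haveI : NeZero n := ⟨by omega⟩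
  set m := (Finset.univ.filter (fun i : Fin n => b < d i)).card with hmdef
  have hm : m ≤ n := by
    rw [hmdef]
    exact le_trans (Finset.card_filter_le _ _) (by simp)
  have key : ∀ i : Fin n, b < d i ↔ i.val < m := by
    intro i
    constructor
    · intro hi
      have hsub : Finset.univ.filter (fun j : Fin n => j.val ≤ i.val) ⊆
          Finset.univ.filter (fun j : Fin n => b < d j) := by
        intro j hj
        simp only [Finset.mem_filter, Finset.mem_univ, true_and] at hj ⊢
        exact lt_of_lt_of_le hi (hmono j i (by rwa [Fin.le_def]))
      have h1 := Finset.card_le_card hsub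
      rw [CFG.card_le_val] at h1
      omega
    · intro hi
      by_contra hb'
      have hsub : Finset.univ.filter (fun j : Fin n => b < d j) ⊆
          Finset.univ.filter (fun j : Fin n => j.val < i.val) := by
        intro j hj
        simp only [Finset.mem_filter, Finset.mem_univ, true_and] at hj ⊢
        by_contra hji
        exact hb' (lt_of_lt_of_le hj (hmono i j (by rw [Fin.le_def]; omega)))
      have h1 := Finset.card_le_card hsub
      rw [CFG.card_lt n i.val (le_of_lt i.isLt)] at h1
      omega
  have hd : ∀ i : Fin n, d i = if i.val < m then b + 1 else b := by
    intro i
    have h1 := hlb i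
    have h2 := hub i
    split_ifs with h
    · have := (key i).2 h; omega
    · have : ¬ b < d i := fun hh => h ((key i).1 hh); omega
  have hfeq : Finset.univ.filter (fun i : Fin n => i.val < m) =
      Finset.univ.filter (fun i : Fin n => b < d i) := by
    ext i
    simp only [Finset.mem_filter, Finset.mem_univ, true_and]
    exact (key i).symm
  have hsum : ∑ i, d i = b * n + m := by
    rw [Finset.sum_congr rfl (fun i _ => hd i)]
    have hstep : ∀ i : Fin n,
        (if i.val < m then b + 1 else b) = b + (if i.val < m then 1 else 0) := by
      intro i; split_ifs <;> omega
    rw [Finset.sum_congr rfl (fun i _ => hstep i), Finset.sum_add_distrib,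
      Finset.sum_const, ← Finset.card_filter, hfeq, ← hmdef, Finset.card_univ,
      Fintype.card_fin, smul_eq_mul]
    ring
  have hpar : (b * n + m) % 2 = 0 := by
    rw [← hsum]
    exact Nat.even_iff.mp heven
  have hn3' : 1 ≤ m → b + 3 ≤ n := by
    intro h1
    obtain ⟨i, hi⟩ := Finset.card_pos.mp (show 0 < (Finset.univ.filter
      (fun i : Fin n => b < d i)).card by omega)
    have hi' : b < d i := (Finset.mem_filter.mp hi).2
    have ha1 : a = b + 1 := le_antisymm hab' (le_trans hi' (hub i))
    by_contra h
    push_neg at h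
    have h2 : n ≤ b + 2 := by omega
    have h3 : 4 * b * n ≤ 4 * b * (b + 2) := Nat.mul_le_mul_left _ h2
    have h4 : (a + b + 1) ^ 2 = 4 * (b * b) + 8 * b + 4 := by rw [ha1]; ring
    have h5 : 4 * b * (b + 2) = 4 * (b * b) + 8 * b := by ring
    omega
  constructor
  · obtain ⟨G, inst, hG⟩ := CFG.master n b m hb hm hnb2 hn3' hpar
    exact ⟨G, inst, fun i => by rw [hG i, ← hd i]⟩
  · intro s hs1 hs2
    have hsn : s ≤ n := by omega
    have hL : ∑ i ∈ Finset.univ.filter (fun i : Fin n => i.val < s), d i ≤ s * a := by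
      have h := Finset.sum_le_card_nsmul
        (Finset.univ.filter (fun i : Fin n => i.val < s)) d a (fun i _ => hub i)
      rwa [CFG.card_lt n s hsn, smul_eq_mul] at h
    have hR : s * b ≤ ∑ i ∈ Finset.univ.filter (fun i : Fin n => n - s ≤ i.val), d i := by
      have h := Finset.card_nsmul_le_sum
        (Finset.univ.filter (fun i : Fin n => n - s ≤ i.val)) d b (fun i _ => hlb i)
      rwa [CFG.card_ge n s hsn, smul_eq_mul] at h
    have hn5 : a = b + 1 → 5 ≤ n := by
      intro h
      have h2 : 2 + b - a = 1 := by omega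
      rw [h2, one_mul] at hn1
      omega
    have ha : a < n - s - 1 + b := by
      rcases (show a = b ∨ a = b + 1 by omega) with h | h
      · omega
      · have := hn5 h; omega
    have hkey : s * a < s * (n - s - 1) + s * b :=
      calc s * a < s * (n - s - 1 + b) := (mul_lt_mul_iff_right₀ (by omega : 0 < s)).mpr ha
        _ = s * (n - s - 1) + s * b := by ring
    exact lt_of_le_of_lt hL (lt_of_lt_of_le hkey (Nat.add_le_add_left hR _))
end
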